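/- arXiv:2103.09552 — 2 statements merged into one kernel-verified Lean document; each statement's English description precedes it below -/
import Mathlib

section
/- Let $V$ be a finite set and $f : V \to \mathbb{R}^\times$ a non-vanishing function. The linear map $\varphi : \Lambda_n(V) \to \Lambda_n(V)$ sending an elementary $n$-path $v_0 v_1 \cdots v_n$ to $\frac{1}{f(v_0) f(v_1) \cdots f(v_n)} v_0 v_1 \cdots v_n$ satisfies $\partial_n^f \circ \varphi = \varphi \circ \partial_n$ for all $n$, where $\partial_n^f (v_0 \cdots v_n) = \sum_{i=0}^n (-1)^i f(v_i)\, v_0 \cdots \widehat{v_i} \cdots v_n$ and $\partial_n$ is the unweighted boundary. -/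
open LinearMap

/-- The `f`-weighted boundary operator `∂ₙ₊₁^f` on paths,
`∂^f(v₀…vₙ₊₁) = ∑ᵢ (-1)ⁱ f(vᵢ) v₀…v̂ᵢ…vₙ₊₁`, on the space `Λₙ₊₁(V)` of
`(n+1)`-paths (free real vector space on sequences of `n+2` vertices). -/
noncomputable def pathBoundary (V : Type) (f : V → ℝ) (n : ℕ) :
    ((Fin (n + 2) → V) →₀ ℝ) →ₗ[ℝ] ((Fin (n + 1) → V) →₀ ℝ) :=
  Finsupp.lsum ℝ fun p => LinearMap.toSpanSingleton ℝ _
    (∑ i : Fin (n + 2), ((-1 : ℝ) ^ (i : ℕ) * f (p i)) •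
      Finsupp.single (p ∘ i.succAbove) 1)

/-- The rescaling map `φ(v₀…vₙ) = (f(v₀)⋯f(vₙ))⁻¹ v₀…vₙ` on `Λₙ(V)`. -/
noncomputable def pathRescale (V : Type) (f : V → ℝ) (n : ℕ) :
    ((Fin (n + 1) → V) →₀ ℝ) →ₗ[ℝ] ((Fin (n + 1) → V) →₀ ℝ) :=
  Finsupp.lsum ℝ fun p => LinearMap.toSpanSingleton ℝ _
    ((∏ i, f (p i))⁻¹ • Finsupp.single p 1)

section

variable {V : Type} (f : V → ℝ)

theorem pathBoundary_single {n : ℕ} (p : Fin (n + 2) → V) :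
    pathBoundary V f n (Finsupp.single p 1) =
      ∑ i : Fin (n + 2), ((-1 : ℝ) ^ (i : ℕ) * f (p i)) •
        Finsupp.single (p ∘ i.succAbove) 1 := by
  simp [pathBoundary]

theorem pathRescale_single {n : ℕ} (p : Fin (n + 1) → V) :
    pathRescale V f n (Finsupp.single p 1) = (∏ i, f (p i))⁻¹ • Finsupp.single p 1 := by
  simp [pathRescale]

theorem inv_prod_mul_apply_eq_inv_prod_succAbove {n : ℕ} (p : Fin (n + 2) → V)
    (i : Fin (n + 2)) (hfi : f (p i) ≠ 0) :
    (∏ j, f (p j))⁻¹ * f (p i) = (∏ j, f (p (i.succAbove j)))⁻¹ := by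
  rw [Fin.prod_univ_succAbove _ i, mul_inv, mul_right_comm, inv_mul_cancel₀ hfi, one_mul]

end

theorem stmt8_general (V : Type) (f : V → ℝ) (hf : ∀ v, f v ≠ 0) :
    ∀ n : ℕ, (pathBoundary V f n).comp (pathRescale V f (n + 1))
      = (pathRescale V f n).comp (pathBoundary V (fun _ => 1) n) := by
  intro n
  refine Finsupp.lhom_ext' fun p => LinearMap.ext_ring ?_
  simp only [LinearMap.comp_apply, Finsupp.lsingle_apply, pathRescale_single, map_smul,
    pathBoundary_single, map_sum, Finset.smul_sum, smul_smul]
  refine Finset.sum_congr rfl fun i _ => ?_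
  rw [Function.comp_def, mul_one, mul_left_comm, inv_prod_mul_apply_eq_inv_prod_succAbove f p i (hf _),
    mul_comm]

/-- the rescaling map intertwines the unweighted boundary with the
`f`-weighted boundary: `∂ₙ^f ∘ φ = φ ∘ ∂ₙ`. -/
theorem stmt8 (V : Type) [Fintype V] (f : V → ℝ) (hf : ∀ v, f v ≠ 0) :
    ∀ n : ℕ, (pathBoundary V f n).comp (pathRescale V f (n + 1))
      = (pathRescale V f n).comp (pathBoundary V (fun _ => 1) n) :=
  stmt8_general V f hf
end

section
/- Let $V$ be a finite set and $f : V \to \mathbb{R}^\times$ non-vanishing. The map $\varphi(v_0 \cdots v_n) = \frac{1}{f(v_0) \cdots f(v_n)} v_0 \cdots v_n$ on $\Lambda_n(V)$ maps the subspace $I_n(V)$ of irregular $n$-paths isomorphically onto itself, and hence induces a chain isomorphism of the quotient complexes $\mathcal{R}_*(V) = \Lambda_*(V)/I_*(V)$ intertwining the unweighted regular boundary $\partial_n$ with the $f$-weighted regular boundary $\partial_n^f$. -/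
open LinearMap Submodule

/-- The subspace `Iₙ(V) ⊆ Λₙ(V)` spanned by irregular elementary paths
(those with two equal consecutive vertices). -/
noncomputable def Irr (V : Type) (n : ℕ) :
    Submodule ℝ ((Fin (n + 1) → V) →₀ ℝ) :=
  Submodule.span ℝ {x | ∃ p : Fin (n + 1) → V,
    (∃ i : Fin n, p i.castSucc = p i.succ) ∧ x = Finsupp.single p 1}

/-! Rescaling by `(f(v₀)⋯f(vₙ))⁻¹` is diagonal in the basis of elementary paths, so it preserves
the span of the irregular ones, and rescaling by `1/f` inverts it. Deleting `vᵢ` from `v₀⋯vₙ₊₁`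
removes exactly the factor `f(vᵢ)` from the product, which turns the unweighted face `∂ᵢ` into
the weighted one: `φ ∘ ∂ = ∂^f ∘ φ`. -/

namespace PathComplex

variable {V : Type} (f g : V → ℝ) (n : ℕ)

lemma pathRescale_single (p : Fin (n + 1) → V) (b : ℝ) :
    pathRescale V f n (Finsupp.single p b) = (∏ i, f (p i))⁻¹ • Finsupp.single p b := by
  rw [pathRescale, Finsupp.lsum_single, toSpanSingleton_apply, smul_comm,
    Finsupp.smul_single_one]

lemma pathBoundary_single (p : Fin (n + 2) → V) (b : ℝ) :
    pathBoundary V f n (Finsupp.single p b) =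
      ∑ i : Fin (n + 2), ((-1 : ℝ) ^ (i : ℕ) * f (p i)) • Finsupp.single (p ∘ i.succAbove) b := by
  simp only [pathBoundary, Finsupp.lsum_single, toSpanSingleton_apply, Finset.smul_sum]
  exact Finset.sum_congr rfl fun i _ => by rw [smul_comm, Finsupp.smul_single_one]

lemma pathRescale_comp_pathRescale :
    (pathRescale V g n).comp (pathRescale V f n) = pathRescale V (fun v => f v * g v) n := by
  refine Finsupp.lhom_ext fun p b => ?_
  simp only [LinearMap.comp_apply, pathRescale_single, map_smul, smul_smul,
    Finset.prod_mul_distrib, mul_inv]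

lemma pathRescale_one : pathRescale V (fun _ => 1) n = LinearMap.id :=
  Finsupp.lhom_ext fun p b => by
    rw [pathRescale_single, Finset.prod_const_one, inv_one, one_smul, LinearMap.id_apply]

lemma irr_le_comap_pathRescale : Irr V n ≤ (Irr V n).comap (pathRescale V f n) := by
  rw [Irr, span_le]
  rintro _ ⟨p, hp, rfl⟩
  rw [SetLike.mem_coe, mem_comap, pathRescale_single]
  exact smul_mem _ _ (subset_span ⟨p, hp, rfl⟩)

variable {f}

lemma pathRescale_comp_pathRescale_of_mul_eq_one (h : ∀ v, f v * g v = 1) :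
    (pathRescale V g n).comp (pathRescale V f n) = LinearMap.id := by
  rw [pathRescale_comp_pathRescale, funext h, pathRescale_one]

noncomputable def pathRescaleEquiv (hf : ∀ v, f v ≠ 0) :
    ((Fin (n + 1) → V) →₀ ℝ) ≃ₗ[ℝ] ((Fin (n + 1) → V) →₀ ℝ) :=
  .ofLinearMap (pathRescale V f n) (pathRescale V (fun v => (f v)⁻¹) n)
    (pathRescale_comp_pathRescale_of_mul_eq_one _ n fun v => inv_mul_cancel₀ (hf v))
    (pathRescale_comp_pathRescale_of_mul_eq_one _ n fun v => mul_inv_cancel₀ (hf v))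

lemma map_pathRescale_irr (hf : ∀ v, f v ≠ 0) : (Irr V n).map (pathRescale V f n) = Irr V n := by
  refine le_antisymm (map_le_iff_le_comap.2 (irr_le_comap_pathRescale f n)) fun x hx => ?_
  refine ⟨pathRescale V (fun v => (f v)⁻¹) n x, irr_le_comap_pathRescale _ n hx, ?_⟩
  rw [← LinearMap.comp_apply,
    pathRescale_comp_pathRescale_of_mul_eq_one _ n fun v => inv_mul_cancel₀ (hf v), id_apply]

lemma pathRescale_comp_pathBoundary (hf : ∀ v, f v ≠ 0) :
    (pathRescale V f n).comp (pathBoundary V g n)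
      = (pathBoundary V (fun v => g v * f v) n).comp (pathRescale V f (n + 1)) := by
  refine Finsupp.lhom_ext fun p b => ?_
  simp only [LinearMap.comp_apply, pathBoundary_single, pathRescale_single, map_sum, map_smul,
    Finset.smul_sum, smul_smul]
  refine Finset.sum_congr rfl fun i _ => ?_
  rw [Fin.prod_univ_succAbove (fun j => f (p j)) i]
  congr 1
  simp only [Function.comp_apply]
  field_simp [hf (p i)]

end PathComplex

open PathComplex in
theorem stmt10_general (V : Type) (f : V → ℝ) (hf : ∀ v, f v ≠ 0)
    (hbd : ∀ n, Irr V (n + 1) ≤ (Irr V n).comap (pathBoundary V (fun _ => 1) n))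
    (hbdf : ∀ n, Irr V (n + 1) ≤ (Irr V n).comap (pathBoundary V f n))
    (hres : ∀ n, Irr V n ≤ (Irr V n).comap (pathRescale V f n)) :
    (∀ n, Submodule.map (pathRescale V f n) (Irr V n) = Irr V n) ∧
    (∀ n, Function.Bijective
      (Submodule.mapQ (Irr V n) (Irr V n) (pathRescale V f n) (hres n))) ∧
    (∀ n, (Submodule.mapQ (Irr V n) (Irr V n) (pathRescale V f n)
            (hres n)).comp
          (Submodule.mapQ (Irr V (n + 1)) (Irr V n)
            (pathBoundary V (fun _ => 1) n) (hbd n))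
        = (Submodule.mapQ (Irr V (n + 1)) (Irr V n) (pathBoundary V f n)
            (hbdf n)).comp
          (Submodule.mapQ (Irr V (n + 1)) (Irr V (n + 1))
            (pathRescale V f (n + 1)) (hres (n + 1)))) := by
  refine ⟨fun n => map_pathRescale_irr n hf, fun n => ?_, fun n => ?_⟩
  · exact (Quotient.equiv _ _ (pathRescaleEquiv n hf) (map_pathRescale_irr n hf)).bijective
  · rw [← mapQ_comp, ← mapQ_comp]
    congr 1
    simpa using pathRescale_comp_pathBoundary (fun _ => 1) n hf

/-- the rescaling map maps `Iₙ(V)` isomorphically onto itself and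
hence induces a chain isomorphism of the quotient complexes
`𝓡ₙ(V) = Λₙ(V)/Iₙ(V)` intertwining the unweighted regular boundary with the
`f`-weighted regular boundary. (The hypotheses record that both boundaries and
the rescaling map preserve `I_*(V)` and so descend to the quotients.) -/
theorem stmt10 (V : Type) [Fintype V] (f : V → ℝ) (hf : ∀ v, f v ≠ 0)
    (hbd : ∀ n, Irr V (n + 1) ≤ (Irr V n).comap (pathBoundary V (fun _ => 1) n))
    (hbdf : ∀ n, Irr V (n + 1) ≤ (Irr V n).comap (pathBoundary V f n))
    (hres : ∀ n, Irr V n ≤ (Irr V n).comap (pathRescale V f n)) :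
    (∀ n, Submodule.map (pathRescale V f n) (Irr V n) = Irr V n) ∧
    (∀ n, Function.Bijective
      (Submodule.mapQ (Irr V n) (Irr V n) (pathRescale V f n) (hres n))) ∧
    (∀ n, (Submodule.mapQ (Irr V n) (Irr V n) (pathRescale V f n)
            (hres n)).comp
          (Submodule.mapQ (Irr V (n + 1)) (Irr V n)
            (pathBoundary V (fun _ => 1) n) (hbd n))
        = (Submodule.mapQ (Irr V (n + 1)) (Irr V n) (pathBoundary V f n)
            (hbdf n)).comp
          (Submodule.mapQ (Irr V (n + 1)) (Irr V (n + 1))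
            (pathRescale V f (n + 1)) (hres (n + 1)))) :=
  stmt10_general V f hf hbd hbdf hres
end
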